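/- arXiv:2002.01076 — 4 statements merged into one kernel-verified Lean document; each statement's English description precedes it below -/
import Mathlib

section
/- There exists an absolute constant C > 0 such that for any irrational α and any k ≥ 2, if q_k is the denominator of the k-th convergent of α, then ∑_{0<|q|<q_k} 1/‖qα‖² ≤ C q_k². -/
/-!
By the best approximation property of convergents, `‖jα‖ ≥ |q_{k-1}α - p_{k-1}| ≥ 1/(2q_k)` for
`0 < |j| < q_k`: writing `(j, m) = x(q_{k-1}, p_{k-1}) + y(q_k, p_k)` with integers `x, y` (the
determinant is `±1`), the constraint `0 < j < q_k` forces `x ≠ 0` and `xy ≤ 0`, while consecutive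
errors `q_nα - p_n` have opposite signs. So on each of `0 < i < q_k` and `-q_k < i < 0` the points
`iα - round(iα)` are `δ = 1/(2q_k)`-separated from each other and from `0`. Labelling such points
`t` by `⌊t/δ⌋` is injective, into nonzero integers `c` with `|t| ≥ |c|δ/2`, so
`∑ 1/t² ≤ (4/δ²) ∑_{c ≠ 0} 1/c² = 4π²/(3δ²)`.
-/

/-- Distance from a real number to the nearest integer. -/
noncomputable def nint (x : ℝ) : ℝ := |x - round x|

open GenContFract Real

theorem tsum_one_div_int_sq : ∑' n : ℤ, 1 / (n : ℝ) ^ 2 = π ^ 2 / 3 := by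
  have h := tsum_nat_add_neg (summable_one_div_int_pow.2 one_lt_two)
  simp only [Int.cast_natCast, Int.cast_neg, neg_sq, Int.cast_zero, ne_eq, OfNat.ofNat_ne_zero,
    not_false_eq_true, zero_pow, div_zero, add_zero, ← two_mul] at h
  rw [← h, tsum_mul_left, hasSum_zeta_two.tsum_eq]
  ring

-- the term at `c = 0` is `1 / 0 = 0`
theorem sum_one_div_int_sq_le (s : Finset ℤ) : ∑ c ∈ s, 1 / (c : ℝ) ^ 2 ≤ π ^ 2 / 3 :=
  tsum_one_div_int_sq ▸
    (summable_one_div_int_pow.2 one_lt_two).sum_le_tsum s fun _ _ => by positivity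

theorem floor_ne_zero_and_abs_floor_le {t : ℝ} (ht : 1 ≤ |t|) :
    ⌊t⌋ ≠ 0 ∧ |(⌊t⌋ : ℝ)| ≤ 2 * |t| := by
  have h₁ := Int.floor_le t
  have h₂ := Int.lt_floor_add_one t
  rcases le_abs'.1 ht with ht | ht
  · have : (⌊t⌋ : ℝ) < 0 := by linarith
    refine ⟨by exact_mod_cast this.ne, ?_⟩
    rw [abs_of_neg this, abs_of_neg (by linarith)]
    linarith
  · have : (0 : ℝ) < ⌊t⌋ := by
      exact_mod_cast Int.floor_pos.2 ht
    refine ⟨by exact_mod_cast this.ne', ?_⟩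
    rw [abs_of_pos this, abs_of_pos (by linarith)]
    linarith

theorem sum_one_div_sq_le_of_separated {ι : Type*} (s : Finset ι) (x : ι → ℝ) {δ : ℝ}
    (hδ : 0 < δ) (hx : ∀ i ∈ s, δ ≤ |x i|)
    (hsep : ∀ i ∈ s, ∀ j ∈ s, i ≠ j → δ ≤ |x i - x j|) :
    ∑ i ∈ s, 1 / x i ^ 2 ≤ 4 * π ^ 2 / 3 / δ ^ 2 := by
  set c : ι → ℤ := fun i => ⌊x i / δ⌋
  have hinj : Set.InjOn c s := by
    intro i hi j hj hij
    by_contra hne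
    have := Int.abs_sub_lt_one_of_floor_eq_floor hij
    rw [← sub_div, abs_div, abs_of_pos hδ, div_lt_one hδ] at this
    exact (hsep i hi j hj hne).not_gt this
  have hpoint : ∀ i ∈ s, 1 / x i ^ 2 ≤ 4 / δ ^ 2 * (1 / (c i : ℝ) ^ 2) := by
    intro i hi
    have ht : 1 ≤ |x i / δ| := by
      rw [abs_div, abs_of_pos hδ, one_le_div hδ]
      exact hx i hi
    obtain ⟨hc0, hc⟩ := floor_ne_zero_and_abs_floor_le ht
    rw [abs_div, abs_of_pos hδ, ← mul_div_assoc, le_div_iff₀ hδ] at hc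
    have hcδ : 0 < ((c i : ℝ) * δ) ^ 2 / 4 := by
      have : (c i : ℝ) ≠ 0 := by exact_mod_cast hc0
      positivity
    calc 1 / x i ^ 2 ≤ 1 / (((c i : ℝ) * δ) ^ 2 / 4) := by
          refine one_div_le_one_div_of_le hcδ ?_
          have : ((c i : ℝ) * δ) ^ 2 ≤ (2 * |x i|) ^ 2 := by
            rw [← sq_abs, abs_mul, abs_of_pos hδ]
            gcongr
          rw [mul_pow 2, sq_abs] at this
          linarith
      _ = 4 / δ ^ 2 * (1 / (c i : ℝ) ^ 2) := by field_simp
  calc ∑ i ∈ s, 1 / x i ^ 2 ≤ ∑ i ∈ s, 4 / δ ^ 2 * (1 / (c i : ℝ) ^ 2) :=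
        Finset.sum_le_sum hpoint
    _ = 4 / δ ^ 2 * ∑ n ∈ s.image c, 1 / (n : ℝ) ^ 2 := by
        rw [Finset.sum_image hinj, Finset.mul_sum]
    _ ≤ 4 / δ ^ 2 * (π ^ 2 / 3) := by gcongr; exact sum_one_div_int_sq_le _
    _ = 4 * π ^ 2 / 3 / δ ^ 2 := by ring

theorem abs_le_abs_add_of_mul_nonneg {R : Type*} [Ring R] [LinearOrder R] [IsStrictOrderedRing R]
    {a b : R} (hab : 0 ≤ a * b) : |a| ≤ |a + b| := by
  rcases (mul_nonneg_iff.1 hab) with ⟨ha, hb⟩ | ⟨ha, hb⟩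
  · rw [abs_of_nonneg ha, abs_of_nonneg (add_nonneg ha hb)]
    exact le_add_of_nonneg_right hb
  · rw [abs_of_nonpos ha, abs_of_nonpos (add_nonpos ha hb), neg_add]
    exact le_add_of_nonneg_right (neg_nonneg.2 hb)

theorem abs_sub_le_abs_int_mul_sub_of_det {α : ℝ} {p₀ q₀ p₁ q₁ : ℤ}
    (hdet : (p₀ * q₁ - q₀ * p₁) ^ 2 = 1) (hq₀ : 0 ≤ q₀)
    (hsign : (q₀ * α - p₀) * (q₁ * α - p₁) ≤ 0) {i : ℤ} (hi : 0 < i) (hiq : i < q₁) (m : ℤ) :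
    |q₀ * α - p₀| ≤ |i * α - m| := by
  obtain ⟨x, y, hxi, hxm⟩ : ∃ x y : ℤ, x * q₀ + y * q₁ = i ∧ x * p₀ + y * p₁ = m :=
    ⟨(p₀ * q₁ - q₀ * p₁) * (q₁ * m - p₁ * i), (p₀ * q₁ - q₀ * p₁) * (p₀ * i - q₀ * m),
      by linear_combination i * hdet, by linear_combination m * hdet⟩
  have hsplit : (i : ℝ) * α - m = x * (q₀ * α - p₀) + y * (q₁ * α - p₁) := by
    rw [← hxi, ← hxm]; push_cast; ring
  have hx : x ≠ 0 ∧ x * y ≤ 0 := by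
    rcases lt_trichotomy y 0 with hy | rfl | hy
    · have : 0 < x := by nlinarith
      exact ⟨this.ne', by nlinarith⟩
    · exact ⟨by rintro rfl; omega, by simp⟩
    · have : x < 0 := by nlinarith
      exact ⟨this.ne, by nlinarith⟩
  have hxy : (0 : ℝ) ≤ x * (q₀ * α - p₀) * (y * (q₁ * α - p₁)) := by
    have : (x * y : ℝ) ≤ 0 := by exact_mod_cast hx.2
    nlinarith
  calc |q₀ * α - p₀| ≤ |(x : ℝ)| * |q₀ * α - p₀| :=
        le_mul_of_one_le_left (abs_nonneg _) (by exact_mod_cast Int.one_le_abs hx.1)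
    _ ≤ |i * α - m| := by
        rw [← abs_mul, hsplit]; exact abs_le_abs_add_of_mul_nonneg hxy

namespace GenContFract

variable {α : ℝ}

theorem of_not_terminatedAt_of_irrational (hα : Irrational α) (n : ℕ) :
    ¬(GenContFract.of α).TerminatedAt n := fun h => by
  obtain ⟨r, rfl⟩ := (terminates_iff_rat α).1 ⟨n, h⟩
  exact Rat.not_irrational r hα

theorem exists_pair_of_irrational (hα : Irrational α) (n : ℕ) :
    ∃ gp : Pair ℝ, (GenContFract.of α).s.get? n = some gp ∧ gp.a = 1 ∧ 1 ≤ gp.b ∧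
      ∃ z : ℤ, gp.b = z := by
  obtain ⟨gp, hgp⟩ := Option.ne_none_iff_exists'.1 (of_not_terminatedAt_of_irrational hα n)
  exact ⟨gp, hgp, of_partNum_eq_one (partNum_eq_s_a hgp),
    of_one_le_get?_partDen (partDen_eq_s_b hgp), exists_int_eq_of_partDen (partDen_eq_s_b hgp)⟩

theorem exists_int_eq_nums_of_irrational (hα : Irrational α) (n : ℕ) :
    ∃ z : ℤ, (z : ℝ) = (GenContFract.of α).nums n := by
  suffices ∀ n, (∃ z : ℤ, (z : ℝ) = (GenContFract.of α).nums n) ∧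
      ∃ z : ℤ, (z : ℝ) = (GenContFract.of α).nums (n + 1) from (this n).1
  intro n
  induction n with
  | zero =>
    obtain ⟨gp, hgp, ha, -, b, hb⟩ := exists_pair_of_irrational hα 0
    refine ⟨⟨⌊α⌋, by rw [zeroth_num_eq_h, of_h_eq_floor]⟩, b * ⌊α⌋ + 1, ?_⟩
    rw [first_num_eq hgp, ha, hb, of_h_eq_floor]; push_cast; ring
  | succ n ih =>
    obtain ⟨⟨z₀, hz₀⟩, z₁, hz₁⟩ := ih
    obtain ⟨gp, hgp, ha, -, b, hb⟩ := exists_pair_of_irrational hα (n + 1)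
    refine ⟨⟨z₁, hz₁⟩, b * z₁ + z₀, ?_⟩
    rw [nums_recurrence hgp hz₀.symm hz₁.symm, ha, hb]; push_cast; ring

section Convergents

variable (hα : Irrational α) {q : ℕ → ℕ} (hq : ∀ n, (q n : ℝ) = (GenContFract.of α).dens n)
  {p : ℕ → ℤ} (hp : ∀ n, (p n : ℝ) = (GenContFract.of α).nums n)
include hα hq

theorem den_pos (n : ℕ) : 0 < (q n : ℝ) := by
  rw [hq]
  refine lt_of_lt_of_le ?_ (succ_nth_fib_le_of_nth_den
    (Or.inr (of_not_terminatedAt_of_irrational hα (n - 1))))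
  exact_mod_cast Nat.fib_pos.2 n.succ_pos

theorem den_add_den_le (n : ℕ) : (q n : ℝ) + q (n + 1) ≤ q (n + 2) := by
  obtain ⟨gp, hgp, ha, hb, -⟩ := exists_pair_of_irrational hα (n + 1)
  have hpos := den_pos hα hq (n + 1)
  rw [hq, hq, hq, dens_recurrence hgp rfl rfl, ha] at *
  nlinarith

include hp

theorem num_mul_den_sub_den_mul_num (n : ℕ) :
    p n * (q (n + 1) : ℤ) - q n * p (n + 1) = (-1) ^ (n + 1) := by
  have hdet := SimpContFract.determinant (s := ⟨GenContFract.of α, of_isSimpContFract α⟩)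
    (of_not_terminatedAt_of_irrational hα n)
  change (GenContFract.of α).nums n * (GenContFract.of α).dens (n + 1) -
    (GenContFract.of α).dens n * (GenContFract.of α).nums (n + 1) = _ at hdet
  rw [← hp, ← hp, ← hq, ← hq] at hdet
  exact_mod_cast hdet

theorem abs_den_mul_sub_num_le (n : ℕ) : |q n * α - p n| ≤ 1 / q (n + 1) := by
  have h := abs_sub_convs_le (of_not_terminatedAt_of_irrational hα n)
  have hq₀ := den_pos hα hq n
  have hq₁ := den_pos hα hq (n + 1)
  rw [conv_eq_num_div_den, ← hp, ← hq, ← hq] at h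
  calc |q n * α - p n| = q n * |α - p n / q n| := by
        rw [← abs_of_pos hq₀, ← abs_mul, abs_of_pos hq₀, mul_sub, mul_div_cancel₀ _ hq₀.ne']
    _ ≤ q n * (1 / (q n * q (n + 1))) := by gcongr
    _ = 1 / q (n + 1) := by field_simp

theorem half_le_neg_one_pow_mul_den_mul_sub_num (n : ℕ) :
    1 / 2 ≤ (-1) ^ n * ((q n * α - p n) * q (n + 1)) := by
  have hdet : (p n * q (n + 1) - q n * p (n + 1) : ℝ) = (-1) ^ (n + 1) := by
    exact_mod_cast num_mul_den_sub_den_mul_num hα hq hp n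
  -- the next error is at most `q n / q (n + 2) ≤ 1/2` after scaling by `q n`
  have hnext : |(q (n + 1) * α - p (n + 1)) * q n| ≤ 1 / 2 := by
    have hq₀ := den_pos hα hq n
    have hq₂ := den_pos hα hq (n + 2)
    have hgrow := den_add_den_le hα hq n
    have hmono : (q n : ℝ) ≤ q (n + 1) := by rw [hq, hq]; exact of_den_mono
    rw [abs_mul, abs_of_pos hq₀]
    calc |q (n + 1) * α - p (n + 1)| * q n ≤ 1 / q (n + 2) * q n := by
          gcongr; exact abs_den_mul_sub_num_le hα hq hp (n + 1)
      _ ≤ 1 / 2 := by rw [div_mul_eq_mul_div, div_le_div_iff₀ hq₂ two_pos]; linarith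
  have hsq : ((-1 : ℝ) ^ n) ^ 2 = 1 := by rw [← pow_mul, pow_mul', neg_one_sq, one_pow]
  have := neg_abs_le ((-1) ^ n * ((q (n + 1) * α - p (n + 1)) * q n))
  rw [abs_mul, abs_pow, abs_neg, abs_one, one_pow, one_mul] at this
  linear_combination this + hnext + (-1) ^ n * hdet - hsq

theorem one_div_two_mul_den_le_abs_den_mul_sub_num (n : ℕ) :
    1 / (2 * q (n + 1)) ≤ |q n * α - p n| := by
  have h := half_le_neg_one_pow_mul_den_mul_sub_num hα hq hp n
  have hq₁ := den_pos hα hq (n + 1)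
  have : (-1) ^ n * ((q n * α - p n) * q (n + 1)) ≤ |q n * α - p n| * q (n + 1) := by
    simpa [abs_mul, abs_of_pos hq₁] using le_abs_self ((-1) ^ n * ((q n * α - p n) * q (n + 1)))
  rw [div_le_iff₀ (by positivity)]
  linarith

theorem den_mul_sub_num_mul_den_mul_sub_num_nonpos (n : ℕ) :
    (q n * α - p n) * (q (n + 1) * α - p (n + 1)) ≤ 0 := by
  have h₀ := half_le_neg_one_pow_mul_den_mul_sub_num hα hq hp n
  have h₁ : 1 / 2 ≤ (-1) ^ (n + 1) * ((q (n + 1) * α - p (n + 1)) * q (n + 2)) :=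
    half_le_neg_one_pow_mul_den_mul_sub_num hα hq hp (n + 1)
  have hsq : ((-1 : ℝ) ^ n) ^ 2 = 1 := by rw [← pow_mul, pow_mul', neg_one_sq, one_pow]
  have hprod := mul_pos (h₀.trans_lt' one_half_pos) (h₁.trans_lt' one_half_pos)
  have hneg : (q n * α - p n) * (q (n + 1) * α - p (n + 1)) * (q (n + 1) * q (n + 2)) < 0 := by
    linear_combination
      hprod - (q n * α - p n) * (q (n + 1) * α - p (n + 1)) * (q (n + 1) * q (n + 2)) * hsq
  exact (neg_of_mul_neg_left hneg (by positivity)).le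

theorem one_div_two_mul_den_le_abs_int_mul_sub (n : ℕ) {i : ℤ} (hi : i ≠ 0)
    (hiq : |i| < q (n + 1)) (m : ℤ) : 1 / (2 * q (n + 1)) ≤ |i * α - m| := by
  wlog hi₀ : 0 < i generalizing i m
  · have := this (neg_ne_zero.2 hi) (by rwa [abs_neg]) (-m) (by omega)
    rwa [Int.cast_neg, Int.cast_neg, neg_mul, ← neg_add', abs_neg, ← sub_eq_add_neg] at this
  refine (one_div_two_mul_den_le_abs_den_mul_sub_num hα hq hp n).trans ?_
  refine abs_sub_le_abs_int_mul_sub_of_det ?_ (Int.natCast_nonneg _)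
    (by exact_mod_cast den_mul_sub_num_mul_den_mul_sub_num_nonpos hα hq hp n) hi₀
    (lt_of_le_of_lt (le_abs_self i) hiq) m
  rw [num_mul_den_sub_den_mul_num hα hq hp n, ← pow_mul, pow_mul', neg_one_sq, one_pow]

theorem sum_one_div_nint_sq_le (n : ℕ) (s : Finset ℤ) (hs₀ : ∀ i ∈ s, i ≠ 0 ∧ |i| < q (n + 1))
    (hs : ∀ i ∈ s, ∀ j ∈ s, |i - j| < q (n + 1)) :
    ∑ i ∈ s, 1 / nint (i * α) ^ 2 ≤ 16 * π ^ 2 / 3 * q (n + 1) ^ 2 := by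
  have hq₁ := den_pos hα hq (n + 1)
  have hδ : 0 < 1 / (2 * (q (n + 1) : ℝ)) := by positivity
  have hsum := sum_one_div_sq_le_of_separated s (fun i : ℤ => i * α - round (i * α)) hδ
    (fun i hi => one_div_two_mul_den_le_abs_int_mul_sub hα hq hp n (hs₀ i hi).1 (hs₀ i hi).2 _)
    (fun i hi j hj hij => by
      have := one_div_two_mul_den_le_abs_int_mul_sub hα hq hp n (sub_ne_zero.2 hij) (hs i hi j hj)
        (round (i * α) - round (j * α))
      convert this using 2; push_cast; ring)
  simp only [nint, sq_abs] at hsum ⊢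
  convert hsum using 1
  field_simp
  ring

end Convergents

end GenContFract

/-- there is an absolute constant `C > 0` such that for every irrational `α`
with continued fraction convergent denominators `q` and every `k ≥ 2`,
`∑_{0<|q|<q_k} 1/‖qα‖² ≤ C q_k²`. -/
theorem sum_inv_nint_sq_upper_bound :
    ∃ C : ℝ, 0 < C ∧ ∀ (α : ℝ), Irrational α →
      ∀ (q : ℕ → ℕ), (∀ n, (q n : ℝ) = (GenContFract.of α).dens n) →
      ∀ k : ℕ, 2 ≤ k →
      ∑ i ∈ (Finset.Ioo (-(q k : ℤ)) (q k : ℤ)).erase 0, 1 / nint ((i : ℝ) * α) ^ 2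
        ≤ C * (q k : ℝ) ^ 2 := by
  refine ⟨32 * π ^ 2 / 3, by positivity, fun α hα q hq k hk => ?_⟩
  choose p hp using exists_int_eq_nums_of_irrational hα
  obtain ⟨n, rfl⟩ : ∃ n, k = n + 1 := ⟨k - 1, by omega⟩
  set S := (Finset.Ioo (-(q (n + 1) : ℤ)) (q (n + 1))).erase 0 with hS
  have hpos := sum_one_div_nint_sq_le hα hq hp n {i ∈ S | 0 < i} ?_ ?_
  have hneg := sum_one_div_nint_sq_le hα hq hp n {i ∈ S | ¬0 < i} ?_ ?_
  · rw [← Finset.sum_filter_add_sum_filter_not S (0 < ·)]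
    linarith
  all_goals
    intros
    simp only [hS, Finset.mem_filter, Finset.mem_erase, Finset.mem_Ioo, abs_lt] at *
    omega
end

section
/- Denjoy–Koksma inequality: Let α be irrational with continued fraction convergent denominators q_n, and let f: ℝ/ℤ → ℝ be a function of bounded variation Var(f). Then for every n ≥ 0 and every x ∈ ℝ/ℤ, |∑_{j=0}^{q_n−1} f(x + jα) − q_n ∫_{ℝ/ℤ} f(z) dz| ≤ Var(f). -/
/-!
Write `P/Q = p_n/q_n` and `δ = α - P/Q`, so that `gcd(P, Q) = 1` and `|δ| ≤ 1/Q²`. Then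
`x + jα ≡ x + (jP mod Q)/Q + jδ (mod 1)`: as `j` runs over `0, …, Q-1`, the residues
`jP mod Q` run over all cells of the partition of `[0, 1)` into `Q` intervals of length `1/Q`,
while the drift `jδ` moves by less than `(Q-1)/Q² < 1/Q` in total. So after a common shift, the
`Q` orbit points lie one in each cell of a partition of a period. On a cell, `f` at any point
differs from `Q` times its integral over the cell by at most the variation of `f` on that cell;
summing over the cells gives the bound `Var(f)`.
-/

open Set MeasureTheory

namespace GenContFract

theorem exists_int_eq_contsAux {K : Type*} [Field K] [LinearOrder K] [FloorRing K] (v : K)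
    (n : ℕ) : ∃ a b : ℤ, (GenContFract.of v).contsAux n = ⟨a, b⟩ := by
  induction n using Nat.twoStepInduction with
  | zero => exact ⟨1, 0, by simp [contsAux]⟩
  | one => exact ⟨⌊v⌋, 1, by simp [contsAux, of_h_eq_floor]⟩
  | more n ih₀ ih₁ =>
    obtain ⟨a₀, b₀, h₀⟩ := ih₀
    obtain ⟨a₁, b₁, h₁⟩ := ih₁
    cases hs : (GenContFract.of v).s.get? n with
    | none => exact ⟨a₁, b₁, by simp [contsAux, hs, h₁]⟩
    | some gp =>
      obtain ⟨ha, z, hz⟩ := of_partNum_eq_one_and_exists_int_partDen_eq hs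
      refine ⟨z * a₁ + a₀, z * b₁ + b₀, ?_⟩
      rw [contsAux_recurrence hs h₀ h₁, ha, hz]
      simp

theorem not_terminatedAt_of_irrational {v : ℝ} (hv : Irrational v) (n : ℕ) :
    ¬(GenContFract.of v).TerminatedAt n := fun h ↦ by
  obtain ⟨r, hr⟩ := (terminates_iff_rat v).1 ⟨n, h⟩
  exact hv ⟨r, hr.symm⟩

theorem exists_isCoprime_abs_sub_div_le_of_irrational {v : ℝ} (hv : Irrational v) (n : ℕ) :
    ∃ P Q : ℤ, (Q : ℝ) = (GenContFract.of v).dens n ∧ 0 < Q ∧ IsCoprime P Q ∧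
      |v - P / Q| ≤ 1 / (Q : ℝ) ^ 2 := by
  obtain ⟨P, Q, hPQ⟩ := exists_int_eq_contsAux v (n + 1)
  obtain ⟨P', Q', hPQ'⟩ := exists_int_eq_contsAux v (n + 2)
  have hnum : (GenContFract.of v).nums n = P := by
    rw [num_eq_conts_a, nth_cont_eq_succ_nth_contAux, hPQ]
  have hden : (GenContFract.of v).dens n = Q := by
    rw [den_eq_conts_b, nth_cont_eq_succ_nth_contAux, hPQ]
  have hnum' : (GenContFract.of v).nums (n + 1) = P' := by
    rw [num_eq_conts_a, nth_cont_eq_succ_nth_contAux, hPQ']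
  have hden' : (GenContFract.of v).dens (n + 1) = Q' := by
    rw [den_eq_conts_b, nth_cont_eq_succ_nth_contAux, hPQ']
  have hterm := not_terminatedAt_of_irrational hv n
  have hdet : P * Q' - Q * P' = (-1) ^ (n + 1) := by
    have := SimpContFract.determinant (s := SimpContFract.of v) hterm
    rw [SimpContFract.of, hnum, hden, hden', hnum'] at this
    exact_mod_cast this
  have hQ : (1 : ℝ) ≤ Q := hden ▸
    (Nat.one_le_cast.2 (Nat.fib_pos.2 n.succ_pos)).trans
      (succ_nth_fib_le_of_nth_den (Or.inr (not_terminatedAt_of_irrational hv _)))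
  have hQQ' : (Q : ℝ) ≤ Q' := hden ▸ hden' ▸ of_den_mono
  refine ⟨P, Q, hden.symm, by exact_mod_cast hQ,
    ⟨(-1) ^ (n + 1) * Q', -(-1) ^ (n + 1) * P', ?_⟩, ?_⟩
  · linear_combination
      (-1) ^ (n + 1) * hdet + pow_mul_pow_eq_one (n + 1) (by norm_num : (-1 : ℤ) * -1 = 1)
  · calc |v - P / Q| ≤ 1 / (Q * Q') := by
          simpa [conv_eq_num_div_den, hnum, hden, hden'] using abs_sub_convs_le hterm
      _ ≤ 1 / (Q : ℝ) ^ 2 := by gcongr; nlinarith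

end GenContFract

theorem Int.bijOn_toNat_mul_emod {P : ℤ} {Q : ℕ} (hPQ : IsCoprime P Q) :
    BijOn (fun j : ℕ ↦ ((j * P) % Q).toNat) (Finset.range Q) (Finset.range Q) := by
  have hmaps : MapsTo (fun j : ℕ ↦ ((j * P) % Q).toNat) (Finset.range Q) (Finset.range Q) := by
    intro j hj
    simp only [Finset.coe_range, mem_Iio] at hj ⊢
    have := Int.emod_lt_of_pos (j * P) (by omega : (0 : ℤ) < Q)
    omega
  refine ((Finset.range Q).finite_toSet.injOn_iff_bijOn_of_mapsTo hmaps).1 ?_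
  intro j₁ hj₁ j₂ hj₂ h
  simp only [Finset.coe_range, mem_Iio] at hj₁ hj₂
  have hQ : (Q : ℤ) ≠ 0 := by omega
  have hmod : (j₁ * P : ℤ) ≡ j₂ * P [ZMOD Q] := by
    have := congrArg ((↑) : ℕ → ℤ) h
    rwa [Int.toNat_of_nonneg (Int.emod_nonneg _ hQ), Int.toNat_of_nonneg (Int.emod_nonneg _ hQ)]
      at this
  have : (j₁ : ℤ) ≡ j₂ [ZMOD Q] :=
    Int.modEq_of_dvd (hPQ.symm.dvd_of_dvd_mul_right (by simpa [sub_mul] using hmod.dvd))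
  exact (Int.natCast_modEq_iff.1 this).eq_of_lt_of_lt hj₁ hj₂

theorem exists_forall_nat_mul_mem_Icc {δ h : ℝ} {N : ℕ} (hδ : (N - 1) * |δ| ≤ h) :
    ∃ c, ∀ j < N, j * δ ∈ Icc c (c + h) := by
  have hj : ∀ j < N, j * |δ| ≤ h := fun j hj ↦ by
    refine le_trans (mul_le_mul_of_nonneg_right ?_ (abs_nonneg δ)) hδ
    have : (j : ℝ) + 1 ≤ N := by exact_mod_cast hj
    linarith
  rcases le_total 0 δ with hδ₀ | hδ₀
  · refine ⟨0, fun j hj' ↦ ⟨by positivity, ?_⟩⟩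
    simpa [abs_of_nonneg hδ₀] using hj j hj'
  · refine ⟨-h, fun j hj' ↦ ⟨?_, ?_⟩⟩
    · have := hj j hj'
      rw [abs_of_nonpos hδ₀] at this
      linarith
    · simpa using mul_nonpos_of_nonneg_of_nonpos j.cast_nonneg hδ₀

variable {f : ℝ → ℝ}

theorem BoundedVariationOn.intervalIntegrable {a b : ℝ} (hab : a ≤ b)
    (hf : BoundedVariationOn f (Icc a b)) : IntervalIntegrable f volume a b := by
  obtain ⟨p, q, hp, hq, rfl⟩ := hf.locallyBoundedVariationOn.exists_monotoneOn_sub_monotoneOn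
  rw [← uIcc_of_le hab] at hp hq
  exact hp.intervalIntegrable.sub hq.intervalIntegrable

theorem BoundedVariationOn.abs_mul_sub_integral_le {u v y : ℝ}
    (hf : BoundedVariationOn f (Icc u v)) (hy : y ∈ Icc u v) :
    |(v - u) * f y - ∫ t in u..v, f t| ≤ (v - u) * (eVariationOn f (Icc u v)).toReal := by
  have huv : u ≤ v := hy.1.trans hy.2
  have hosc : ∀ t ∈ uIoc u v, ‖f y - f t‖ ≤ (eVariationOn f (Icc u v)).toReal := fun t ht ↦ by
    rw [uIoc_of_le huv] at ht
    exact hf.dist_le hy (Ioc_subset_Icc_self ht)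
  have := intervalIntegral.norm_integral_le_of_norm_le_const hosc
  rwa [intervalIntegral.integral_sub intervalIntegrable_const (hf.intervalIntegrable huv),
    intervalIntegral.integral_const, smul_eq_mul, Real.norm_eq_abs,
    abs_of_nonneg (sub_nonneg.2 huv), mul_comm _ (v - u)] at this

theorem BoundedVariationOn.abs_riemannSum_sub_integral_le {ι : Type*} {s : Finset ι}
    {g : ι → ℕ} {y : ι → ℝ} {a h : ℝ} {N : ℕ} (hf : BoundedVariationOn f (Icc a (a + N * h)))
    (hh : 0 ≤ h) (hg : BijOn g s (Finset.range N))
    (hy : ∀ i ∈ s, y i ∈ Icc (a + g i * h) (a + (g i + 1) * h)) :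
    |h * ∑ i ∈ s, f (y i) - ∫ t in a..a + N * h, f t|
      ≤ h * (eVariationOn f (Icc a (a + N * h))).toReal := by
  set m : ℕ → ℝ := fun k ↦ a + k * h
  have hm : Monotone m := fun k l hkl ↦ by simp only [m]; gcongr
  have hwidth : ∀ k, m (k + 1) - m k = h := fun k ↦ by simp only [m]; push_cast; ring
  have hbv : ∀ k < N, BoundedVariationOn f (Icc (m k) (m (k + 1))) := fun k hk ↦
    hf.mono (Icc_subset_Icc (by simpa [m] using hm k.zero_le) (by simpa [m] using hm hk))
  have reindex (F : ℕ → ℝ) : ∑ i ∈ s, F (g i) = ∑ k ∈ Finset.range N, F k :=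
    Finset.sum_nbij g hg.mapsTo hg.injOn hg.surjOn fun _ _ ↦ rfl
  have hint : ∫ t in a..a + N * h, f t = ∑ i ∈ s, ∫ t in m (g i)..m (g i + 1), f t := by
    rw [reindex fun k ↦ ∫ t in m k..m (k + 1), f t,
      intervalIntegral.sum_integral_adjacent_intervals fun k hk ↦
        (hbv k hk).intervalIntegrable (hm k.le_succ)]
    simp [m]
  have hvar : (eVariationOn f (Icc a (a + N * h))).toReal
      = ∑ i ∈ s, (eVariationOn f (Icc (m (g i)) (m (g i + 1)))).toReal := by
    rw [reindex fun k ↦ (eVariationOn f (Icc (m k) (m (k + 1)))).toReal,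
      ← ENNReal.toReal_sum fun k hk ↦ hbv k (Finset.mem_range.1 hk), eVariationOn.sum' f hm]
    simp [m]
  calc |h * ∑ i ∈ s, f (y i) - ∫ t in a..a + N * h, f t|
      = |∑ i ∈ s, ((m (g i + 1) - m (g i)) * f (y i) - ∫ t in m (g i)..m (g i + 1), f t)| := by
        simp only [hint, hwidth, Finset.sum_sub_distrib, Finset.mul_sum]
    _ ≤ ∑ i ∈ s, |(m (g i + 1) - m (g i)) * f (y i) - ∫ t in m (g i)..m (g i + 1), f t| :=
        Finset.abs_sum_le_sum_abs _ _
    _ ≤ ∑ i ∈ s,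
          (m (g i + 1) - m (g i)) * (eVariationOn f (Icc (m (g i)) (m (g i + 1)))).toReal :=
        Finset.sum_le_sum fun i hi ↦
          (hbv _ (Finset.mem_range.1 (hg.mapsTo hi))).abs_mul_sub_integral_le
            (by simpa [m] using hy i hi)
    _ = h * (eVariationOn f (Icc a (a + N * h))).toReal := by
        simp only [hvar, hwidth, Finset.mul_sum]

namespace Function.Periodic

variable {c : ℝ}

theorem eVariationOn_Icc_add_const (hf : Periodic f c) (u v : ℝ) :
    eVariationOn f (Icc (u + c) (v + c)) = eVariationOn f (Icc u v) := by
  have h := eVariationOn.comp_eq_of_monotoneOn f (· + c)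
    ((monotone_id.add_const c).monotoneOn (Icc u v))
  rwa [image_add_const_Icc, show f ∘ (· + c) = f from funext hf, eq_comm] at h

theorem eVariationOn_Icc_add_eq (hf : Periodic f c) (hc : 0 < c) (a b : ℝ) :
    eVariationOn f (Icc a (a + c)) = eVariationOn f (Icc b (b + c)) := by
  have step {a b : ℝ} (hab : a ≤ b) (hba : b ≤ a + c) :
      eVariationOn f (Icc a (a + c)) = eVariationOn f (Icc b (b + c)) := by
    have split {u w : ℝ} (v : ℝ) (huv : u ≤ v) (hvw : v ≤ w) :
        eVariationOn f (Icc u w) = eVariationOn f (Icc u v) + eVariationOn f (Icc v w) := by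
      simpa using (eVariationOn.Icc_add_Icc f huv hvw (mem_univ v)).symm
    rw [split b hab hba, split (w := b + c) (a + c) hba (by linarith),
      hf.eVariationOn_Icc_add_const, add_comm]
  have hloc : IsLocallyConstant fun a ↦ eVariationOn f (Icc a (a + c)) := by
    refine (IsLocallyConstant.iff_eventually_eq _).2 fun a ↦ ?_
    filter_upwards [Ioo_mem_nhds (sub_lt_self a hc) (lt_add_of_pos_right a hc)] with b hb
    rcases le_total a b with hab | hba
    · exact (step hab hb.2.le).symm
    · exact step hba (by linarith [hb.1])
  exact hloc.apply_eq_of_preconnectedSpace a b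

end Function.Periodic

theorem Int.cast_div_natCast_eq_emod_div_add_ediv (a : ℤ) {Q : ℕ} (hQ : 0 < Q) :
    (a : ℝ) / Q = ((a % Q).toNat : ℝ) / Q + (a / Q : ℤ) := by
  have h := Int.emod_add_mul_ediv a Q
  rw [← Int.toNat_of_nonneg (Int.emod_nonneg _ (by omega))] at h
  have h' : (a : ℝ) = ((a % Q).toNat : ℝ) + Q * (a / Q : ℤ) := by exact_mod_cast h.symm
  rw [h', add_div, mul_div_cancel_left₀ _ (Nat.cast_ne_zero.2 hQ.ne')]

theorem exists_forall_add_mul_sub_ediv_mem_Icc {α : ℝ} {P : ℤ} {Q : ℕ} (hQ : 0 < Q)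
    (hα : |α - P / Q| ≤ 1 / (Q : ℝ) ^ 2) (x : ℝ) :
    ∃ a : ℝ, ∀ j < Q, x + j * α - (j * P / Q : ℤ) ∈
      Icc (a + (((j * P) % Q).toNat : ℝ) * (1 / Q))
        (a + (((j * P) % Q).toNat + 1) * (1 / Q)) := by
  obtain ⟨c, hc⟩ := exists_forall_nat_mul_mem_Icc (δ := α - P / Q) (h := 1 / Q) (N := Q) <|
    calc ((Q : ℝ) - 1) * |α - P / Q| ≤ (Q - 1) * (1 / Q ^ 2) := by
          gcongr
          exact sub_nonneg.2 (Nat.one_le_cast.2 hQ)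
      _ ≤ 1 / Q := by field_simp; linarith
  refine ⟨x + c, fun j hj ↦ ?_⟩
  obtain ⟨h₁, h₂⟩ := hc j hj
  have hj : (j : ℝ) * α = (j * P : ℤ) / Q + j * (α - P / Q) := by push_cast; ring
  rw [hj, Int.cast_div_natCast_eq_emod_div_add_ediv _ hQ, mul_one_div, add_mul, one_mul,
    mul_one_div]
  constructor <;> linarith

theorem Function.Periodic.abs_sum_sub_integral_le_of_abs_sub_div_le (hper : Periodic f 1)
    (hBV : BoundedVariationOn f (Icc 0 1)) {α : ℝ} {P : ℤ} {Q : ℕ} (hQ : 0 < Q)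
    (hPQ : IsCoprime P Q) (hα : |α - P / Q| ≤ 1 / (Q : ℝ) ^ 2) (x : ℝ) :
    |∑ j ∈ Finset.range Q, f (x + j * α) - Q * ∫ z in (0 : ℝ)..1, f z|
      ≤ (eVariationOn f (Icc 0 1)).toReal := by
  have hQ₀ : (0 : ℝ) < Q := Nat.cast_pos.2 hQ
  obtain ⟨a, ha⟩ := exists_forall_add_mul_sub_ediv_mem_Icc hQ hα x
  have hperiod : Q * (1 / Q : ℝ) = 1 := mul_one_div_cancel hQ₀.ne'
  have hvar : eVariationOn f (Icc a (a + 1)) = eVariationOn f (Icc 0 1) := by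
    simpa using hper.eVariationOn_Icc_add_eq one_pos a 0
  have key := BoundedVariationOn.abs_riemannSum_sub_integral_le
    (by rwa [hperiod, BoundedVariationOn, hvar]) (by positivity) (Int.bijOn_toNat_mul_emod hPQ)
    fun j hj ↦ ha j (Finset.mem_range.1 hj)
  have horbit (j : ℕ) : f (x + j * α - (j * P / Q : ℤ)) = f (x + j * α) := by
    simpa using hper.sub_int_mul_eq (j * P / Q)
  rw [hperiod, hvar, hper.intervalIntegral_add_eq a 0, zero_add] at key
  simp only [horbit] at key
  calc |∑ j ∈ Finset.range Q, f (x + j * α) - Q * ∫ z in (0 : ℝ)..1, f z|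
      = Q * |1 / Q * ∑ j ∈ Finset.range Q, f (x + j * α) - ∫ z in (0 : ℝ)..1, f z| := by
        rw [← abs_of_pos hQ₀, ← abs_mul, abs_of_pos hQ₀, mul_sub, ← mul_assoc, hperiod, one_mul]
    _ ≤ Q * (1 / Q * (eVariationOn f (Icc 0 1)).toReal) := by gcongr
    _ = (eVariationOn f (Icc 0 1)).toReal := by rw [← mul_assoc, hperiod, one_mul]

/-- Denjoy–Koksma inequality: for an irrational `α` with convergent
denominators `q`, a `1`-periodic function `f : ℝ → ℝ` of bounded variation on a period,
every `n` and every `x`,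
`|∑_{j=0}^{q_n−1} f(x + jα) − q_n ∫₀¹ f| ≤ Var(f)`. -/
theorem denjoy_koksma
    (α : ℝ) (hα : Irrational α)
    (q : ℕ → ℕ) (hq : ∀ n, (q n : ℝ) = (GenContFract.of α).dens n)
    (f : ℝ → ℝ) (hper : Function.Periodic f 1)
    (hBV : BoundedVariationOn f (Set.Icc 0 1)) :
    ∀ (n : ℕ) (x : ℝ),
      |∑ j ∈ Finset.range (q n), f (x + j * α) - (q n : ℝ) * ∫ z in (0:ℝ)..1, f z|
        ≤ (eVariationOn f (Set.Icc 0 1)).toReal := by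
  intro n x
  obtain ⟨P, Q, hQ, hQ₀, hPQ, hPQα⟩ :=
    GenContFract.exists_isCoprime_abs_sub_div_le_of_irrational hα n
  obtain rfl : Q = q n := by exact_mod_cast hQ.trans (hq n).symm
  exact hper.abs_sum_sub_integral_le_of_abs_sub_div_le hBV (by omega) hPQ (by simpa using hPQα) x
end

section
/- Let α be irrational with convergent denominators q_n. If q_{n+1} < q_n² for all sufficiently large n, then for all sufficiently large n there exists an index k with 0 < k < n such that q_n^{1/4} ≤ q_k ≤ q_n^{1/2}. -/
/-!
Since `α` is irrational its denominators grow at least like the Fibonacci numbers, so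
`q N ^ 2 ≤ q n` for `n` large, where `N` is the point from which `q (m + 1) < q m ^ 2`.
Take the last `k < n` with `q k ^ 2 ≤ q n`; then `q n ≤ q (k + 1) ^ 2 < q k ^ 4`, and the
two bounds `q k ^ 2 ≤ q n ≤ q k ^ 4` are the claim after taking roots.
-/

open Filter

theorem Nat.exists_le_lt_and_not_succ {P : ℕ → Prop} {a b : ℕ} (ha : P a) (hb : ¬ P b)
    (hab : a ≤ b) : ∃ k, a ≤ k ∧ k < b ∧ P k ∧ ¬ P (k + 1) := by
  induction b, hab using Nat.le_induction with
  | base => exact absurd ha hb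
  | succ b hab ih =>
    by_cases hPb : P b
    · exact ⟨b, hab, b.lt_succ_self, hPb, hb⟩
    · obtain ⟨k, hak, hkb, hPk, hPk'⟩ := ih hPb
      exact ⟨k, hak, hkb.trans b.lt_succ_self, hPk, hPk'⟩

theorem exists_sq_le_le_pow_four {q : ℕ → ℕ} {N n : ℕ}
    (hstep : ∀ m ≥ N, q (m + 1) < q m ^ 2) (hNn : N ≤ n) (hN : q N ^ 2 ≤ q n)
    (hn : 2 ≤ q n) : ∃ k, N ≤ k ∧ k < n ∧ q k ^ 2 ≤ q n ∧ q n ≤ q k ^ 4 := by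
  have hn_sq : ¬ q n ^ 2 ≤ q n := by nlinarith
  obtain ⟨k, hNk, hkn, hk, hk_succ⟩ :=
    Nat.exists_le_lt_and_not_succ (P := fun k => q k ^ 2 ≤ q n) hN hn_sq hNn
  refine ⟨k, hNk, hkn, hk, ?_⟩
  calc q n ≤ q (k + 1) ^ 2 := (not_le.1 hk_succ).le
    _ ≤ (q k ^ 2) ^ 2 := Nat.pow_le_pow_left (hstep k hNk).le 2
    _ = q k ^ 4 := by ring

theorem Real.rpow_inv_natCast_le_of_le_pow {x y : ℝ} {n : ℕ} (hx : 0 ≤ x) (hy : 0 ≤ y)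
    (hn : n ≠ 0) (h : x ≤ y ^ n) : x ^ (n⁻¹ : ℝ) ≤ y := by
  rwa [Real.rpow_inv_le_iff_of_pos hx hy (by positivity), Real.rpow_natCast]

theorem Real.le_rpow_inv_natCast_of_pow_le {x y : ℝ} {n : ℕ} (hx : 0 ≤ x) (hy : 0 ≤ y)
    (hn : n ≠ 0) (h : x ^ n ≤ y) : x ≤ y ^ (n⁻¹ : ℝ) := by
  rwa [Real.le_rpow_inv_iff_of_pos hx hy (by positivity), Real.rpow_natCast]

theorem GenContFract.not_terminates_of_irrational {α : ℝ} (hα : Irrational α) :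
    ¬ (GenContFract.of α).Terminates := by
  rw [GenContFract.terminates_iff_rat]
  rintro ⟨r, rfl⟩
  exact hα ⟨r, rfl⟩

theorem GenContFract.tendsto_dens_of_irrational {α : ℝ} (hα : Irrational α) :
    Tendsto (fun n => (GenContFract.of α).dens n) atTop atTop := by
  refine tendsto_atTop_mono' atTop ?_ tendsto_natCast_atTop_atTop
  filter_upwards [eventually_ge_atTop 5] with n hn
  calc (n : ℝ) ≤ Nat.fib n := mod_cast Nat.le_fib_self hn
    _ ≤ Nat.fib (n + 1) := mod_cast Nat.fib_le_fib_succ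
    _ ≤ (GenContFract.of α).dens n := GenContFract.succ_nth_fib_le_of_nth_den
        (Or.inr fun h => not_terminates_of_irrational hα ⟨_, h⟩)

/-- if `α` is irrational with convergent denominators `q_n` and
`q_{n+1} < q_n²` for all sufficiently large `n`, then for all sufficiently large `n`
there is `0 < k < n` with `q_n^{1/4} ≤ q_k ≤ q_n^{1/2}`. -/
theorem exists_intermediate_denominator
    (α : ℝ) (hα : Irrational α)
    (q : ℕ → ℕ) (hq : ∀ n, (q n : ℝ) = (GenContFract.of α).dens n)
    (h : ∃ N : ℕ, ∀ n ≥ N, q (n + 1) < q n ^ 2) :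
    ∃ M : ℕ, ∀ n ≥ M, ∃ k : ℕ, 0 < k ∧ k < n ∧
      (q n : ℝ) ^ ((1:ℝ)/4) ≤ (q k : ℝ) ∧ (q k : ℝ) ≤ (q n : ℝ) ^ ((1:ℝ)/2) := by
  obtain ⟨N₀, hN₀⟩ := h
  set N := max N₀ 1
  have hstep : ∀ m ≥ N, q (m + 1) < q m ^ 2 := fun m hm => hN₀ m (le_of_max_le_left hm)
  have hq_tendsto : Tendsto q atTop atTop := by
    refine (tendsto_natCast_atTop_iff (R := ℝ)).1 ?_
    simpa only [hq] using GenContFract.tendsto_dens_of_irrational hα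
  refine eventually_atTop.1 ?_
  filter_upwards [eventually_ge_atTop N, hq_tendsto.eventually_ge_atTop (q N ^ 2),
    hq_tendsto.eventually_ge_atTop 2] with n hNn hN hn
  obtain ⟨k, hNk, hkn, hk_sq, hk_four⟩ := exists_sq_le_le_pow_four hstep hNn hN hn
  refine ⟨k, le_of_max_le_right hNk, hkn, ?_, ?_⟩
  · simpa [one_div] using Real.rpow_inv_natCast_le_of_le_pow (n := 4) (by positivity)
      (by positivity) (by norm_num) (by exact_mod_cast hk_four)
  · simpa [one_div] using Real.le_rpow_inv_natCast_of_pow_le (n := 2) (by positivity)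
      (by positivity) (by norm_num) (by exact_mod_cast hk_sq)
end

section
/- For every ε > 0 there is a constant C(ε) such that for any irrational α with convergent denominators q_k, any k ≥ 1, and any real c with 1 ≤ c ≤ q_k: ∑_{q_k ≤ |q| < q_{k+1}} (1/|q|^{1+ε})·min{1/‖qα‖, c} ≤ C(ε)·log(c+1)/q_k^{ε}. -/
/-!
Let `p / Q` be the `k`-th convergent of `α` and `Q' = q_{k+1}`, so that `|α - p / Q| ≤ 1 / (Q Q')`
and `p` is coprime to `Q`. For `|i| ≤ Q'` the numbers `‖iα‖` and `‖ip / Q‖ = min(r, Q - r) / Q`,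
where `r = ip mod Q`, differ by at most `1 / Q`, so that
`min(1 / ‖iα‖, c) ≤ min(c, 3Q / (min(r, Q - r) + 1))`.
On `Q` consecutive integers `i ↦ ip mod Q` is injective, so the sum over such a block is at most
`∑_{r < Q} min(c, 3Q / (min(r, Q - r) + 1))`, which telescopes against `log` to `≪ Q log(c + 1)`.
Grouping `Q ≤ |i| < Q'` by `j = ⌊|i| / Q⌋` (two blocks each, where `|i| ≥ jQ`) and summing
`(jQ)^{-1-ε}` over `j` gives the bound with `C = 24 ζ(1 + ε)`.
-/

open Finset Real

namespace GenContFract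

theorem exists_int_eq_of_num (v : ℝ) (n : ℕ) : ∃ z : ℤ, (GenContFract.of v).nums n = z := by
  induction n using Nat.twoStepInduction with
  | zero => exact ⟨⌊v⌋, by rw [zeroth_num_eq_h, of_h_eq_floor]⟩
  | one =>
    rcases h : (GenContFract.of v).s.get? 0 with _ | gp
    · exact ⟨⌊v⌋, by rw [nums_stable_of_terminated zero_le_one h, zeroth_num_eq_h, of_h_eq_floor]⟩
    · obtain ⟨ha, z, hb⟩ := of_partNum_eq_one_and_exists_int_partDen_eq h
      exact ⟨z * ⌊v⌋ + 1, by rw [first_num_eq h, of_h_eq_floor, ha, hb]; push_cast; ring⟩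
  | more n ih₀ ih₁ =>
    obtain ⟨a, ha⟩ := ih₀
    obtain ⟨b, hb⟩ := ih₁
    rcases h : (GenContFract.of v).s.get? (n + 1) with _ | gp
    · exact ⟨b, (nums_stable_of_terminated (n + 1).le_succ h).trans hb⟩
    · obtain ⟨hpa, z, hpb⟩ := of_partNum_eq_one_and_exists_int_partDen_eq h
      exact ⟨z * b + a, by rw [nums_recurrence h ha hb, hpa, hpb]; push_cast; ring⟩

end GenContFract

theorem Irrational.exists_isCoprime_abs_sub_div_le {α : ℝ} (hα : Irrational α) {q : ℕ → ℕ}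
    (hq : ∀ n, (q n : ℝ) = (GenContFract.of α).dens n) (k : ℕ) :
    ∃ p : ℤ, IsCoprime (q k : ℤ) p ∧ |α - p / q k| ≤ 1 / (q k * q (k + 1)) := by
  have hnt (n : ℕ) : ¬(GenContFract.of α).TerminatedAt n := fun h => by
    obtain ⟨r, hr⟩ := (GenContFract.terminates_iff_rat α).1 ⟨n, h⟩
    exact hα ⟨r, hr.symm⟩
  obtain ⟨p, hp⟩ := GenContFract.exists_int_eq_of_num α k
  obtain ⟨p', hp'⟩ := GenContFract.exists_int_eq_of_num α (k + 1)
  refine ⟨p, ?_, ?_⟩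
  · have hdet := SimpContFract.determinant (s := SimpContFract.of α) (hnt k)
    have hdetℤ : p * q (k + 1) - q k * p' = (-1 : ℤ) ^ (k + 1) := by
      rw [SimpContFract.of, hp, hp', ← hq, ← hq] at hdet
      exact_mod_cast hdet
    have hunit : (-1 : ℤ) ^ (k + 1) * (-1) ^ (k + 1) = 1 := by rw [← mul_pow]; norm_num
    exact ⟨-((-1) ^ (k + 1) * p'), (-1) ^ (k + 1) * q (k + 1),
      by linear_combination (-1 : ℤ) ^ (k + 1) * hdetℤ + hunit⟩
  · have h := GenContFract.abs_sub_convs_le (hnt k)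
    rwa [GenContFract.conv_eq_num_div_den, hp, ← hq, ← hq] at h

lemma min_le_two_mul_div_add {a b : ℝ} (ha : 0 < a) (hb : 0 < b) :
    min a b ≤ 2 * a * b / (a + b) := by
  rw [le_div_iff₀ (by positivity)]
  nlinarith [min_le_left a b, min_le_right a b]

lemma div_le_log_sub_log {c y : ℝ} (hc : 0 ≤ c) (hcy : c < y) :
    c / y ≤ log y - log (y - c) := by
  have hy : 0 < y := hc.trans_lt hcy
  have h := one_sub_inv_le_log_of_pos (div_pos hy (sub_pos.2 hcy))
  rwa [log_div hy.ne' (sub_pos.2 hcy).ne', inv_div, one_sub_div hy.ne', sub_sub_cancel] at h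

lemma sum_range_min_div_le {c A : ℝ} (hc : 0 < c) (hA : 0 < A) (n : ℕ) :
    ∑ r ∈ range n, min c (A / (r + 1)) ≤ 2 * A * log ((n * c + A) / A) := by
  have hterm (r : ℕ) : min c (A / (r + 1)) ≤
      2 * A * (log (((r + 1 : ℕ) : ℝ) * c + A) - log (r * c + A)) := by
    calc min c (A / (r + 1)) ≤ 2 * c * (A / (r + 1)) / (c + A / (r + 1)) :=
          min_le_two_mul_div_add hc (by positivity)
      _ = 2 * A * (c / ((r + 1) * c + A)) := by field_simp
      _ ≤ 2 * A * (log ((r + 1) * c + A) - log ((r + 1) * c + A - c)) := by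
          gcongr; exact div_le_log_sub_log hc.le (by nlinarith [(r.cast_nonneg : (0 : ℝ) ≤ r)])
      _ = _ := by push_cast; ring_nf
  calc ∑ r ∈ range n, min c (A / (r + 1))
      ≤ ∑ r ∈ range n, 2 * A * (log (((r + 1 : ℕ) : ℝ) * c + A) - log (r * c + A)) :=
        sum_le_sum fun r _ => hterm r
    _ = 2 * A * log ((n * c + A) / A) := by
        rw [← mul_sum, sum_range_sub (fun r : ℕ => log (r * c + A)),
          log_div (by positivity) hA.ne']
        simp

lemma sum_range_min_div_min_sub_le {c A : ℝ} (hc : 0 < c) (hA : 0 < A) (n : ℕ) :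
    ∑ r ∈ range n, min c (A / ((min r (n - r) : ℕ) + 1)) ≤ 4 * A * log ((n * c + A) / A) := by
  set f : ℕ → ℝ := fun r => min c (A / (r + 1))
  have hf : Antitone f := fun r s hrs => by
    dsimp only [f]; gcongr
  have hf0 (r : ℕ) : 0 ≤ f r := le_min hc.le (by positivity)
  have hreflect : ∑ r ∈ range n, f (n - r) ≤ ∑ r ∈ range n, f r := by
    rw [← sum_range_reflect]
    exact sum_le_sum fun r hr => hf (by have := mem_range.1 hr; omega)
  calc ∑ r ∈ range n, f (min r (n - r))
      ≤ ∑ r ∈ range n, (f r + f (n - r)) :=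
        sum_le_sum fun r _ => hf.map_min.trans_le (max_le_add_of_nonneg (hf0 _) (hf0 _))
    _ ≤ 2 * ∑ r ∈ range n, f r := by rw [sum_add_distrib]; linarith
    _ ≤ 4 * A * log ((n * c + A) / A) := by linarith [sum_range_min_div_le hc hA n]

lemma nint_le_nint_add_abs_sub (x y : ℝ) : nint x ≤ nint y + |x - y| :=
  calc |x - round x| ≤ |x - round y| := round_le x (round y)
    _ ≤ |x - y| + |y - round y| := abs_sub_le x y (round y)
    _ = nint y + |x - y| := add_comm _ _

lemma nint_intCast_div_natCast {a : ℤ} {Q : ℕ} {r : ℕ} (hr : (r : ℤ) = a % Q) :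
    nint (a / Q) = (min r (Q - r) : ℕ) / Q := by
  rcases Q.eq_zero_or_pos with rfl | hQ
  · simp [nint]
  have hrQ : r ≤ Q := by have := Int.emod_lt_of_pos a (Int.natCast_pos.2 hQ); omega
  have hfract : Int.fract ((a : ℝ) / Q) = r / Q := by
    rw [Int.fract_div_intCast_eq_div_intCast_mod, ← hr, Int.cast_natCast]
  rw [nint, abs_sub_round_eq_min, hfract, Nat.cast_min, Nat.cast_sub hrQ, ← min_div_div_right
    (Nat.cast_nonneg Q), sub_div, div_self (Nat.cast_pos.2 hQ).ne']

lemma min_one_div_le_min_div {y c Q t : ℝ} (hQ : 0 < Q) (hcQ : c ≤ Q) (ht : 0 ≤ t)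
    (hy : (t - 1) / Q ≤ y) : min (1 / y) c ≤ min c (3 * Q / (t + 1)) := by
  refine le_min (min_le_right _ _) ?_
  rcases le_or_gt t 2 with ht2 | ht2
  · calc min (1 / y) c ≤ Q := (min_le_right _ _).trans hcQ
      _ ≤ 3 * Q / (t + 1) := by rw [le_div_iff₀ (by linarith)]; nlinarith
  · have hy0 : 0 < y := lt_of_lt_of_le (div_pos (by linarith) hQ) hy
    calc min (1 / y) c ≤ 1 / ((t - 1) / Q) :=
          (min_le_left _ _).trans (one_div_le_one_div_of_le (div_pos (by linarith) hQ) hy)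
      _ ≤ 3 * Q / (t + 1) := by
          rw [one_div_div, div_le_div_iff₀ (by linarith) (by linarith)]; nlinarith

lemma Int.injOn_mul_emod_Ico {Q p : ℤ} (hcop : IsCoprime Q p) (m : ℤ) :
    Set.InjOn (fun i => i * p % Q) (Set.Ico m (m + Q)) := by
  intro i hi i' hi' h
  have hdvd : Q ∣ (i' - i) * p := by
    rw [sub_mul]; exact Int.ModEq.dvd h
  have hlt : |i' - i| < Q := by
    rw [abs_lt]; simp only [Set.mem_Ico] at hi hi'; omega
  linarith [Int.eq_zero_of_abs_lt_dvd (hcop.dvd_of_dvd_mul_right hdvd) hlt]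

section RationalApproximation

variable {α : ℝ} {Q Q' : ℕ} {p : ℤ}

lemma sub_one_div_le_nint_mul (hQ' : 0 < Q') (happ : |α - p / Q| ≤ 1 / (Q * Q')) {i : ℤ}
    (hi : |i| ≤ Q') {r : ℕ} (hr : (r : ℤ) = i * p % Q) :
    (((min r (Q - r) : ℕ) : ℝ) - 1) / Q ≤ nint (i * α) := by
  have hclose : |((i * p : ℤ) : ℝ) / Q - i * α| ≤ 1 / Q :=
    calc |((i * p : ℤ) : ℝ) / Q - i * α| = |(i : ℝ)| * |α - p / Q| := by
          rw [← abs_mul, ← abs_neg]; push_cast; ring_nf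
      _ ≤ Q' * (1 / (Q * Q')) := by gcongr; exact_mod_cast hi
      _ = 1 / Q := by field_simp
  have h := nint_le_nint_add_abs_sub ((i * p : ℤ) / Q) (i * α)
  rw [nint_intCast_div_natCast hr] at h
  rw [sub_div]; linarith

lemma sum_min_one_div_nint_le_of_subset_Ico (hQ : 0 < Q) (hQ' : 0 < Q')
    (happ : |α - p / Q| ≤ 1 / (Q * Q')) (hcop : IsCoprime (Q : ℤ) p) {c : ℝ} (hc : 0 < c)
    (hcQ : c ≤ Q) {B : Finset ℤ} {m : ℤ} (hBm : ↑B ⊆ Set.Ico m (m + Q))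
    (hBQ' : ∀ i ∈ B, |i| ≤ Q') :
    ∑ i ∈ B, min (1 / nint (i * α)) c ≤ 12 * Q * log (c + 1) := by
  set ρ : ℤ → ℕ := fun i => (i * p % Q).toNat
  have hρ (i : ℤ) : (ρ i : ℤ) = i * p % Q := Int.toNat_of_nonneg (Int.emod_nonneg _ (by omega))
  have hρQ (i : ℤ) : ρ i < Q := by
    have := Int.emod_lt_of_pos (i * p) (by omega : (0 : ℤ) < Q); have := hρ i; omega
  have hρinj : Set.InjOn ρ B := fun i hi i' hi' h =>
    Int.injOn_mul_emod_Ico hcop m (hBm hi) (hBm hi')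
      (show i * p % Q = i' * p % Q by rw [← hρ, ← hρ, h])
  set g : ℕ → ℝ := fun r => min c (3 * Q / ((min r (Q - r) : ℕ) + 1))
  have hQℝ : (0 : ℝ) < Q := Nat.cast_pos.2 hQ
  calc ∑ i ∈ B, min (1 / nint (i * α)) c ≤ ∑ i ∈ B, g (ρ i) := sum_le_sum fun i hi =>
        min_one_div_le_min_div hQℝ hcQ (Nat.cast_nonneg _)
          (sub_one_div_le_nint_mul hQ' happ (hBQ' i hi) (hρ i))
    _ = ∑ r ∈ B.image ρ, g r := (sum_image hρinj).symm
    _ ≤ ∑ r ∈ range Q, g r := sum_le_sum_of_subset_of_nonneg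
        (image_subset_iff.2 fun i _ => mem_range.2 (hρQ i))
        fun r _ _ => le_min hc.le (by positivity)
    _ ≤ 4 * (3 * Q) * log ((Q * c + 3 * Q) / (3 * Q)) :=
        sum_range_min_div_min_sub_le hc (by positivity) Q
    _ = 12 * Q * log ((c + 3) / 3) := by
        rw [show (Q * c + 3 * Q) / (3 * Q) = (c + 3) / 3 by field_simp]; ring
    _ ≤ 12 * Q * log (c + 1) := by gcongr; linarith

lemma sum_min_one_div_nint_le_of_natAbs_div_eq (hQ : 0 < Q) (hQ' : 0 < Q')
    (happ : |α - p / Q| ≤ 1 / (Q * Q')) (hcop : IsCoprime (Q : ℤ) p) {c : ℝ} (hc : 0 < c)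
    (hcQ : c ≤ Q) {B : Finset ℤ} {j : ℕ} (hBj : ∀ i ∈ B, i.natAbs / Q = j)
    (hBQ' : ∀ i ∈ B, |i| ≤ Q') :
    ∑ i ∈ B, min (1 / nint (i * α)) c ≤ 24 * Q * log (c + 1) := by
  have hwindow (i : ℤ) (hi : i ∈ B) : j * Q ≤ i.natAbs ∧ i.natAbs ≤ j * Q + Q - 1 :=
    (Nat.div_eq_iff hQ).1 (hBj i hi)
  rw [← sum_filter_add_sum_filter_not B (0 ≤ ·)]
  have hpos := sum_min_one_div_nint_le_of_subset_Ico (α := α) hQ hQ' happ hcop hc hcQ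
    (B := B.filter (0 ≤ ·)) (m := j * Q)
    (fun i hi => by
      obtain ⟨hiB, hi0⟩ := mem_filter.1 hi
      have := hwindow i hiB
      simp only [Set.mem_Ico]; omega)
    fun i hi => hBQ' i (mem_filter.1 hi).1
  have hneg := sum_min_one_div_nint_le_of_subset_Ico (α := α) hQ hQ' happ hcop hc hcQ
    (B := B.filter (¬0 ≤ ·)) (m := -(j * Q + Q) + 1)
    (fun i hi => by
      obtain ⟨hiB, hi0⟩ := mem_filter.1 hi
      have := hwindow i hiB
      simp only [Set.mem_Ico]; omega)
    fun i hi => hBQ' i (mem_filter.1 hi).1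
  linarith

lemma sum_one_div_abs_rpow_mul_min_le_of_natAbs_div_eq {ε : ℝ} (hε : 0 ≤ ε) (hQ : 0 < Q)
    (hQ' : 0 < Q')
    (happ : |α - p / Q| ≤ 1 / (Q * Q')) (hcop : IsCoprime (Q : ℤ) p) {c : ℝ} (hc : 0 < c)
    (hcQ : c ≤ Q) {B : Finset ℤ} {j : ℕ} (hj : 1 ≤ j) (hBj : ∀ i ∈ B, i.natAbs / Q = j)
    (hBQ' : ∀ i ∈ B, |i| ≤ Q') :
    ∑ i ∈ B, 1 / |(i : ℝ)| ^ (1 + ε) * min (1 / nint (i * α)) c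
      ≤ 24 * log (c + 1) / Q ^ ε * (1 / (j : ℝ) ^ (1 + ε)) := by
  have hjQ : (0 : ℝ) < j * Q := by positivity
  have hweight (i : ℤ) (hi : i ∈ B) :
      1 / |(i : ℝ)| ^ (1 + ε) ≤ 1 / ((j : ℝ) * Q) ^ (1 + ε) := by
    have hle : j * Q ≤ i.natAbs := ((Nat.div_eq_iff hQ).1 (hBj i hi)).1
    have hle' : (j : ℝ) * Q ≤ |(i : ℝ)| := by
      rw [← Int.cast_abs, Int.abs_eq_natAbs]; exact_mod_cast hle
    gcongr
  calc ∑ i ∈ B, 1 / |(i : ℝ)| ^ (1 + ε) * min (1 / nint (i * α)) c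
      ≤ ∑ i ∈ B, 1 / ((j : ℝ) * Q) ^ (1 + ε) * min (1 / nint (i * α)) c :=
        sum_le_sum fun i hi => mul_le_mul_of_nonneg_right (hweight i hi)
          (le_min (one_div_nonneg.2 (abs_nonneg _)) hc.le)
    _ ≤ 1 / ((j : ℝ) * Q) ^ (1 + ε) * (24 * Q * log (c + 1)) := by
        rw [← mul_sum]
        gcongr
        exact sum_min_one_div_nint_le_of_natAbs_div_eq hQ hQ' happ hcop hc hcQ hBj hBQ'
    _ = 24 * log (c + 1) / Q ^ ε * (1 / (j : ℝ) ^ (1 + ε)) := by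
        have hQℝ : (0 : ℝ) < Q := Nat.cast_pos.2 hQ
        rw [mul_rpow (by positivity) hQℝ.le, rpow_add hQℝ, rpow_one]
        field_simp

lemma sum_filter_Ioo_one_div_abs_rpow_mul_min_le {ε : ℝ} (hε : 0 ≤ ε) (hQ : 0 < Q)
    (hQ' : 0 < Q')
    (happ : |α - p / Q| ≤ 1 / (Q * Q')) (hcop : IsCoprime (Q : ℤ) p) {c : ℝ} (hc : 0 < c)
    (hcQ : c ≤ Q) :
    ∑ i ∈ (Ioo (-(Q' : ℤ)) Q').filter (fun i => (Q : ℤ) ≤ |i|),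
        1 / |(i : ℝ)| ^ (1 + ε) * min (1 / nint (i * α)) c
      ≤ 24 * log (c + 1) / Q ^ ε * ∑ j ∈ Icc 1 (Q' / Q), 1 / (j : ℝ) ^ (1 + ε) := by
  have hmaps : ∀ i ∈ (Ioo (-(Q' : ℤ)) Q').filter (fun i => (Q : ℤ) ≤ |i|),
      i.natAbs / Q ∈ Icc 1 (Q' / Q) := by
    intro i hi
    simp only [mem_filter, mem_Ioo, Int.abs_eq_natAbs] at hi
    exact mem_Icc.2 ⟨(Nat.one_le_div_iff hQ).2 (by omega), Nat.div_le_div_right (by omega)⟩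
  rw [← sum_fiberwise_of_maps_to hmaps, mul_sum]
  refine sum_le_sum fun j hj => sum_one_div_abs_rpow_mul_min_le_of_natAbs_div_eq hε hQ hQ' happ
    hcop hc hcQ (mem_Icc.1 hj).1 (fun i hi => (mem_filter.1 hi).2) fun i hi => ?_
  simp only [mem_filter, mem_Ioo] at hi
  exact abs_le.2 ⟨by omega, by omega⟩

end RationalApproximation

/-- for every `ε > 0` there is `C(ε)` such that for every irrational `α`
with convergent denominators `q`, every `k ≥ 1` and every real `1 ≤ c ≤ q_k`,
`∑_{q_k ≤ |q| < q_{k+1}} |q|^{−1−ε}·min(1/‖qα‖, c) ≤ C(ε)·log(c+1)/q_k^ε`. -/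
theorem sum_slice_min_upper_bound_eps (ε : ℝ) (hε : 0 < ε) :
    ∃ C : ℝ, 0 < C ∧ ∀ (α : ℝ), Irrational α →
      ∀ (q : ℕ → ℕ), (∀ n, (q n : ℝ) = (GenContFract.of α).dens n) →
      ∀ k : ℕ, 1 ≤ k → ∀ c : ℝ, 1 ≤ c → c ≤ (q k : ℝ) →
      ∑ i ∈ (Finset.Ioo (-(q (k+1) : ℤ)) (q (k+1) : ℤ)).filter (fun i => (q k : ℤ) ≤ |i|),
          (1 / |(i : ℝ)| ^ ((1:ℝ) + ε)) * min (1 / nint ((i : ℝ) * α)) c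
        ≤ C * Real.log (c + 1) / (q k : ℝ) ^ ε := by
  have hsum : Summable fun n : ℕ => 1 / (n : ℝ) ^ (1 + ε) :=
    summable_one_div_nat_rpow.2 (by linarith)
  set Z := ∑' n : ℕ, 1 / (n : ℝ) ^ (1 + ε)
  have hZ : 1 ≤ Z :=
    calc (1 : ℝ) = 1 / ((1 : ℕ) : ℝ) ^ (1 + ε) := by simp
      _ ≤ Z := hsum.le_tsum 1 fun _ _ => by positivity
  refine ⟨24 * Z, by positivity, fun α hα q hq k _ c hc hcq => ?_⟩
  obtain ⟨p, hcop, happ⟩ := hα.exists_isCoprime_abs_sub_div_le hq k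
  have hQ : 0 < q k := by exact_mod_cast (show (0 : ℝ) < q k by linarith)
  have hQ' : 0 < q (k + 1) := by
    have : (q k : ℝ) ≤ q (k + 1) := by rw [hq, hq]; exact GenContFract.of_den_mono
    exact_mod_cast (show (0 : ℝ) < q (k + 1) by linarith)
  calc _ ≤ 24 * log (c + 1) / q k ^ ε * ∑ j ∈ Icc 1 (q (k + 1) / q k), 1 / (j : ℝ) ^ (1 + ε) :=
        sum_filter_Ioo_one_div_abs_rpow_mul_min_le hε.le hQ hQ' happ hcop (by linarith) hcq
    _ ≤ 24 * log (c + 1) / q k ^ ε * Z := by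
        have := log_nonneg (by linarith : (1 : ℝ) ≤ c + 1)
        gcongr
        exact hsum.sum_le_tsum _ fun _ _ => by positivity
    _ = 24 * Z * log (c + 1) / q k ^ ε := by ring
end
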